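/- arXiv:2401.16198 — 2 statements merged into one kernel-verified Lean document; each statement's English description precedes it below -/
import Mathlib

section
/- For every valid dynamic linear contract π there exists a valid dynamic linear contract π′ = ((α′^k, τ′^k, a′^k))_{k=1}^{K′} with Util(π′) ≥ Util(π) whose actions form a consecutively decreasing sequence, i.e., a′^k = a′^1 − (k−1) for every 1 ≤ k ≤ K′. -/
/-!
Build the rewriting segment by segment, keeping after the first `k` segments of `π` a
consecutively decreasing valid contract with the same elapsed time, the same cumulative payment
(hence the same average contract), the same current action, and at least the principal's payoff.
Consecutive best responses differ by at most one, so the next action of `π` steps down (append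
the segment), stays (merge it into the last segment) or steps up. A step up from `a` to `a + 1`
happens at the indifference point `α_{a,a+1} ≤ 1`, and so does the last segment of the
rewriting, which was entered from `a + 1`; merging it and the segment before it with the new
segment under action `a + 1` keeps time and payment, and raises `(1 - α) R_a` to
`(1 - α) R_{a+1}`.
-/

open Finset

/-- Indifference point `α_{i,i+1}` between actions `i` and `i+1`. -/
noncomputable def indiff (c R : ℕ → ℝ) (i : ℕ) : ℝ :=
  (c (i + 1) - c i) / (R (i + 1) - R i)

/-- Breakpoint `α_{i,i+1}` with the convention `α_{0,1} := 0`. -/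
noncomputable def bp (c R : ℕ → ℝ) (i : ℕ) : ℝ :=
  if i = 0 then 0 else indiff c R i

/-- A linear contract instance with `n ≥ 2` actions indexed `1,…,n`:
costs `0 = c_1 < … < c_n`, rewards `0 ≤ R_1 < … < R_n`, and indifference
points satisfying `0 < α_{1,2} < … < α_{n-1,n} ≤ 1`. -/
def LinInstance (n : ℕ) (c R : ℕ → ℝ) : Prop :=
  2 ≤ n ∧ c 1 = 0 ∧ 0 ≤ R 1 ∧
    (∀ i, 1 ≤ i → i < n → c i < c (i + 1)) ∧
    (∀ i, 1 ≤ i → i < n → R i < R (i + 1)) ∧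
    0 < indiff c R 1 ∧
    (∀ i, 1 ≤ i → i + 1 ≤ n - 1 → indiff c R i < indiff c R (i + 1)) ∧
    indiff c R (n - 1) ≤ 1

/-- Best-response set of the agent to the linear contract with scalar `x`. -/
def BR (n : ℕ) (c R : ℕ → ℝ) (x : ℝ) : Set ℕ :=
  {i | i ∈ Finset.Icc 1 n ∧ ∀ j ∈ Finset.Icc 1 n, x * R j - c j ≤ x * R i - c i}

/-- A dynamic linear contract with `K` segments (indexed `1,…,K`):
scalars `α`, durations `τ`, and actions `a`. -/
structure DLC where
  K : ℕ
  α : ℕ → ℝ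
  τ : ℕ → ℝ
  a : ℕ → ℕ

namespace DLC

/-- Total duration of the first `k` segments. -/
noncomputable def Tsum (π : DLC) (k : ℕ) : ℝ := ∑ j ∈ Finset.Icc 1 k, π.τ j

/-- Cumulative scalar contract of the first `k` segments. -/
noncomputable def Asum (π : DLC) (k : ℕ) : ℝ := ∑ j ∈ Finset.Icc 1 k, π.α j * π.τ j

/-- Time-averaged contract `ᾱ^k` after the first `k` segments. -/
noncomputable def avg (π : DLC) (k : ℕ) : ℝ := π.Asum k / π.Tsum k

/-- Validity: positive durations, nonnegative scalars, actions in `{1,…,n}`,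
and each action is a best response to the historical average contract at the
end of its segment, and (for `k ≥ 2`) also at its beginning. -/
def Valid (n : ℕ) (c R : ℕ → ℝ) (π : DLC) : Prop :=
  1 ≤ π.K ∧
    (∀ k ∈ Finset.Icc 1 π.K, 0 ≤ π.α k ∧ 0 < π.τ k ∧ π.a k ∈ Finset.Icc 1 n) ∧
    (∀ k ∈ Finset.Icc 1 π.K, π.a k ∈ BR n c R (π.avg k)) ∧
    (∀ k, 2 ≤ k → k ≤ π.K → π.a k ∈ BR n c R (π.avg (k - 1)))

/-- Time-averaged principal utility. -/
noncomputable def Util (R : ℕ → ℝ) (π : DLC) : ℝ :=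
  (∑ k ∈ Finset.Icc 1 π.K, π.τ k * (1 - π.α k) * R (π.a k)) / π.Tsum π.K

/-- Time-averaged agent utility. -/
noncomputable def UtilA (c R : ℕ → ℝ) (π : DLC) : ℝ :=
  (∑ k ∈ Finset.Icc 1 π.K, π.τ k * (π.α k * R (π.a k) - c (π.a k))) / π.Tsum π.K

/-- Free-fall: the zero contract is offered on every segment after the first. -/
def FreeFall (π : DLC) : Prop := ∀ k, 2 ≤ k → k ≤ π.K → π.α k = 0

/-- Cumulative principal utility `u_P^{(t)}(π)` up to time `t`. -/
noncomputable def cumUtil (R : ℕ → ℝ) (π : DLC) (t : ℝ) : ℝ :=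
  ∑ k ∈ Finset.Icc 1 π.K,
    (min t (π.Tsum k) - min t (π.Tsum (k - 1))) * (1 - π.α k) * R (π.a k)

/-- Cumulative scalar contract `A^{(t)}` up to time `t`. -/
noncomputable def cumA (π : DLC) (t : ℝ) : ℝ :=
  ∑ k ∈ Finset.Icc 1 π.K, (min t (π.Tsum k) - min t (π.Tsum (k - 1))) * π.α k

end DLC

namespace LinInstance

variable {n : ℕ} {c R : ℕ → ℝ}

theorem R_lt_succ (h : LinInstance n c R) {p : ℕ} (hp : 1 ≤ p) (hpn : p < n) :
    R p < R (p + 1) :=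
  h.2.2.2.2.1 p hp hpn

theorem indiff_lt (h : LinInstance n c R) {p q : ℕ} (hp : 1 ≤ p) (hpq : p < q)
    (hq : q ≤ n - 1) : indiff c R p < indiff c R q := by
  induction q, hpq using Nat.le_induction with
  | base => exact h.2.2.2.2.2.2.1 p hp hq
  | succ q hpq ih => exact (ih (by omega)).trans (h.2.2.2.2.2.2.1 q (by omega) hq)

theorem indiff_le_one (h : LinInstance n c R) {p : ℕ} (hp : 1 ≤ p) (hpn : p ≤ n - 1) :
    indiff c R p ≤ 1 := by
  rcases hpn.eq_or_lt with rfl | hlt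
  · exact h.2.2.2.2.2.2.2
  · exact (h.indiff_lt hp hlt le_rfl).le.trans h.2.2.2.2.2.2.2

theorem le_indiff_of_mem_BR (h : LinInstance n c R) {x : ℝ} {p : ℕ}
    (hp : p ∈ BR n c R x) (hpn : p + 1 ≤ n) : x ≤ indiff c R p := by
  obtain ⟨hpi, hbest⟩ := hp
  rw [mem_Icc] at hpi
  have hdev := hbest (p + 1) (mem_Icc.2 ⟨by omega, hpn⟩)
  have hR := h.R_lt_succ hpi.1 (by omega)
  rw [indiff, le_div_iff₀ (by linarith)]
  linarith

theorem indiff_pred_le_of_mem_BR (h : LinInstance n c R) {x : ℝ} {p : ℕ}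
    (hp : p ∈ BR n c R x) (hp2 : 2 ≤ p) : indiff c R (p - 1) ≤ x := by
  obtain ⟨hpi, hbest⟩ := hp
  rw [mem_Icc] at hpi
  have hdev := hbest (p - 1) (mem_Icc.2 ⟨by omega, by omega⟩)
  have hR := h.R_lt_succ (p := p - 1) (by omega) (by omega)
  rw [Nat.sub_add_cancel (by omega)] at hR
  rw [indiff, Nat.sub_add_cancel (by omega), div_le_iff₀ (by linarith)]
  linarith

theorem le_succ_of_mem_BR (h : LinInstance n c R) {x : ℝ} {p q : ℕ}
    (hp : p ∈ BR n c R x) (hq : q ∈ BR n c R x) : q ≤ p + 1 := by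
  by_contra! hqp
  have hp1 := (mem_Icc.1 hp.1).1
  have hqn := (mem_Icc.1 hq.1).2
  have := h.indiff_lt hp1 (show p < q - 1 by omega) (by omega)
  linarith [h.le_indiff_of_mem_BR hp (by omega), h.indiff_pred_le_of_mem_BR hq (by omega)]

theorem eq_indiff_of_mem_BR (h : LinInstance n c R) {x : ℝ} {p : ℕ}
    (hp : p ∈ BR n c R x) (hp1 : p + 1 ∈ BR n c R x) : x = indiff c R p := by
  have hge := h.indiff_pred_le_of_mem_BR hp1 (by have := (mem_Icc.1 hp.1).1; omega)
  rw [Nat.add_sub_cancel] at hge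
  exact le_antisymm (h.le_indiff_of_mem_BR hp (mem_Icc.1 hp1.1).2) hge

end LinInstance

namespace DLC

noncomputable def Usum (R : ℕ → ℝ) (π : DLC) (k : ℕ) : ℝ :=
  ∑ j ∈ Icc 1 k, π.τ j * (1 - π.α j) * R (π.a j)

def ConsecDecreasing (π : DLC) : Prop :=
  ∀ k, 1 ≤ k → k ≤ π.K → (π.a k : ℤ) = (π.a 1 : ℤ) - ((k : ℤ) - 1)

variable {n : ℕ} {c R : ℕ → ℝ} {π : DLC}

@[simp] theorem Tsum_zero : π.Tsum 0 = 0 := by simp [Tsum]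

theorem Tsum_succ (π : DLC) (k : ℕ) : π.Tsum (k + 1) = π.Tsum k + π.τ (k + 1) :=
  sum_Icc_succ_top (by omega) _

theorem Asum_succ (π : DLC) (k : ℕ) : π.Asum (k + 1) = π.Asum k + π.α (k + 1) * π.τ (k + 1) :=
  sum_Icc_succ_top (by omega) _

theorem Usum_succ (π : DLC) (k : ℕ) :
    π.Usum R (k + 1) = π.Usum R k + π.τ (k + 1) * (1 - π.α (k + 1)) * R (π.a (k + 1)) :=
  sum_Icc_succ_top (by omega) _

theorem avg_mul_Tsum {k : ℕ} (h : π.Tsum k ≠ 0) : π.avg k * π.Tsum k = π.Asum k :=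
  div_mul_cancel₀ _ h

theorem avg_one (h : π.τ 1 ≠ 0) : π.avg 1 = π.α 1 := by
  simp [avg, Tsum, Asum, h]

theorem α_succ_eq_avg_of_avg_succ_eq {k : ℕ} (hT : 0 < π.Tsum k) (hτ : 0 < π.τ (k + 1))
    (h : π.avg (k + 1) = π.avg k) : π.α (k + 1) = π.avg k := by
  have hk := avg_mul_Tsum hT.ne'
  have hk1 := avg_mul_Tsum (π := π) (k := k + 1) (by rw [Tsum_succ]; positivity)
  rw [Tsum_succ, Asum_succ, h] at hk1
  exact mul_right_cancel₀ hτ.ne' (by linear_combination hk - hk1)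

theorem Usum_le_of_tail {m K i : ℕ} (hmK : m ≤ K)
    (htail : ∀ j, m < j → j ≤ K →
      π.τ j * (1 - π.α j) * R (π.a j) ≤ π.τ j * (1 - π.α j) * R i) :
    π.Usum R K ≤ π.Usum R m + (π.Tsum K - π.Tsum m - (π.Asum K - π.Asum m)) * R i := by
  induction K, hmK using Nat.le_induction with
  | base => simp
  | succ K hmK ih =>
    have hlast := htail (K + 1) (by omega) le_rfl
    rw [Usum_succ, Tsum_succ, Asum_succ]
    linarith [ih fun j hj hjK => htail j hj (by omega)]

theorem Valid.τ_pos (hπ : π.Valid n c R) {j : ℕ} (hj : 1 ≤ j) (hjK : j ≤ π.K) : 0 < π.τ j :=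
  (hπ.2.1 j (mem_Icc.2 ⟨hj, hjK⟩)).2.1

theorem Valid.α_nonneg (hπ : π.Valid n c R) {j : ℕ} (hj : 1 ≤ j) (hjK : j ≤ π.K) : 0 ≤ π.α j :=
  (hπ.2.1 j (mem_Icc.2 ⟨hj, hjK⟩)).1

theorem Valid.mem_BR_avg (hπ : π.Valid n c R) {j : ℕ} (hj : 1 ≤ j) (hjK : j ≤ π.K) :
    π.a j ∈ BR n c R (π.avg j) :=
  hπ.2.2.1 j (mem_Icc.2 ⟨hj, hjK⟩)

theorem Valid.mem_BR_avg_prev (hπ : π.Valid n c R) {j : ℕ} (hj : 1 ≤ j) (hjK : j + 1 ≤ π.K) :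
    π.a (j + 1) ∈ BR n c R (π.avg j) :=
  hπ.2.2.2 (j + 1) (by omega) hjK

theorem Valid.Tsum_mono (hπ : π.Valid n c R) {j l : ℕ} (hjl : j ≤ l) (hlK : l ≤ π.K) :
    π.Tsum j ≤ π.Tsum l :=
  sum_le_sum_of_subset_of_nonneg (Icc_subset_Icc_right hjl) fun _ hi _ =>
    (hπ.τ_pos (mem_Icc.1 hi).1 ((mem_Icc.1 hi).2.trans hlK)).le

theorem Valid.Asum_mono (hπ : π.Valid n c R) {j l : ℕ} (hjl : j ≤ l) (hlK : l ≤ π.K) :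
    π.Asum j ≤ π.Asum l :=
  sum_le_sum_of_subset_of_nonneg (Icc_subset_Icc_right hjl) fun _ hi _ =>
    have hi' := mem_Icc.1 hi
    mul_nonneg (hπ.α_nonneg hi'.1 (hi'.2.trans hlK)) (hπ.τ_pos hi'.1 (hi'.2.trans hlK)).le

theorem Valid.Tsum_lt (hπ : π.Valid n c R) {j l : ℕ} (hjl : j < l) (hlK : l ≤ π.K) :
    π.Tsum j < π.Tsum l := by
  obtain ⟨l, rfl⟩ : ∃ l', l = l' + 1 := ⟨l - 1, by omega⟩
  calc π.Tsum j ≤ π.Tsum l := hπ.Tsum_mono (by omega) (by omega)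
    _ < π.Tsum (l + 1) := by rw [Tsum_succ]; linarith [hπ.τ_pos (j := l + 1) (by omega) hlK]

theorem Valid.Tsum_pos (hπ : π.Valid n c R) {j : ℕ} (hj : 1 ≤ j) (hjK : j ≤ π.K) :
    0 < π.Tsum j := by
  simpa using hπ.Tsum_lt hj hjK

/-- The average contract is `α_{a,a+1}` at both ends of the segment, hence so is the segment's own
contract. -/
theorem Valid.α_eq_avg (hInst : LinInstance n c R) (hπ : π.Valid n c R) {j : ℕ} (hj : 1 ≤ j)
    (hjK : j ≤ π.K) (hdown : 2 ≤ j → π.a (j - 1) = π.a j + 1)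
    (hup : π.a j + 1 ∈ BR n c R (π.avg j)) : π.α j = π.avg j := by
  obtain rfl | hj2 := hj.eq_or_lt
  · exact (avg_one (hπ.τ_pos le_rfl hjK).ne').symm
  obtain ⟨l, rfl⟩ : ∃ l, j = l + 1 := ⟨j - 1, by omega⟩
  have hprev : π.avg l = indiff c R (π.a (l + 1)) := by
    have hl := hπ.mem_BR_avg (j := l) (by omega) (by omega)
    rw [show l = l + 1 - 1 from rfl, hdown hj2] at hl
    exact hInst.eq_indiff_of_mem_BR (hπ.mem_BR_avg_prev (by omega) hjK) hl
  have hcur := hInst.eq_indiff_of_mem_BR (hπ.mem_BR_avg hj hjK) hup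
  rw [hcur, ← hprev]
  exact α_succ_eq_avg_of_avg_succ_eq (hπ.Tsum_pos (by omega) (by omega)) (hπ.τ_pos hj hjK)
    (hcur.trans hprev.symm)

/-- The first `m` segments of `σ`, followed by one segment that brings the elapsed time to `T`
and the cumulative payment to `A`. -/
noncomputable def splice (σ : DLC) (m : ℕ) (T A : ℝ) (i : ℕ) : DLC where
  K := m + 1
  α := Function.update σ.α (m + 1) ((A - σ.Asum m) / (T - σ.Tsum m))
  τ := Function.update σ.τ (m + 1) (T - σ.Tsum m)
  a := Function.update σ.a (m + 1) i

section splice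

variable {σ : DLC} {m j : ℕ} {T A : ℝ} {i : ℕ}

@[simp] theorem splice_K : (σ.splice m T A i).K = m + 1 := rfl

theorem splice_α_of_le (hj : j ≤ m) : (σ.splice m T A i).α j = σ.α j :=
  Function.update_of_ne (by omega) _ _

theorem splice_τ_of_le (hj : j ≤ m) : (σ.splice m T A i).τ j = σ.τ j :=
  Function.update_of_ne (by omega) _ _

theorem splice_a_of_le (hj : j ≤ m) : (σ.splice m T A i).a j = σ.a j :=
  Function.update_of_ne (by omega) _ _

theorem splice_α_last :
    (σ.splice m T A i).α (m + 1) = (A - σ.Asum m) / (T - σ.Tsum m) :=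
  Function.update_self _ _ _

theorem splice_τ_last : (σ.splice m T A i).τ (m + 1) = T - σ.Tsum m :=
  Function.update_self _ _ _

theorem splice_a_last : (σ.splice m T A i).a (m + 1) = i :=
  Function.update_self _ _ _

theorem Tsum_splice_of_le (hj : j ≤ m) : (σ.splice m T A i).Tsum j = σ.Tsum j :=
  sum_congr rfl fun _ hl => splice_τ_of_le ((mem_Icc.1 hl).2.trans hj)

theorem Asum_splice_of_le (hj : j ≤ m) : (σ.splice m T A i).Asum j = σ.Asum j :=
  sum_congr rfl fun _ hl => by
    rw [splice_α_of_le ((mem_Icc.1 hl).2.trans hj), splice_τ_of_le ((mem_Icc.1 hl).2.trans hj)]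

theorem Usum_splice_of_le (hj : j ≤ m) : (σ.splice m T A i).Usum R j = σ.Usum R j :=
  sum_congr rfl fun _ hl => by
    have hlm := (mem_Icc.1 hl).2.trans hj
    rw [splice_α_of_le hlm, splice_τ_of_le hlm, splice_a_of_le hlm]

theorem avg_splice_of_le (hj : j ≤ m) : (σ.splice m T A i).avg j = σ.avg j := by
  rw [avg, avg, Tsum_splice_of_le hj, Asum_splice_of_le hj]

theorem Tsum_splice : (σ.splice m T A i).Tsum (m + 1) = T := by
  rw [Tsum_succ, Tsum_splice_of_le le_rfl, splice_τ_last, add_sub_cancel]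

theorem Asum_splice (hT : T ≠ σ.Tsum m) : (σ.splice m T A i).Asum (m + 1) = A := by
  rw [Asum_succ, Asum_splice_of_le le_rfl, splice_α_last, splice_τ_last,
    div_mul_cancel₀ _ (sub_ne_zero.2 hT), add_sub_cancel]

theorem avg_splice (hT : T ≠ σ.Tsum m) : (σ.splice m T A i).avg (m + 1) = A / T := by
  rw [avg, Tsum_splice, Asum_splice hT]

theorem Usum_splice (hT : T ≠ σ.Tsum m) :
    (σ.splice m T A i).Usum R (m + 1) =
      σ.Usum R m + (T - σ.Tsum m - (A - σ.Asum m)) * R i := by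
  rw [Usum_succ, Usum_splice_of_le le_rfl, splice_α_last, splice_τ_last, splice_a_last, mul_sub,
    mul_one, mul_div_cancel₀ _ (sub_ne_zero.2 hT)]

theorem splice_valid (hσ : σ.Valid n c R) (hm : m ≤ σ.K) (hT : σ.Tsum m < T)
    (hA : σ.Asum m ≤ A) (hend : i ∈ BR n c R (A / T))
    (hstart : 1 ≤ m → i ∈ BR n c R (σ.avg m)) : (σ.splice m T A i).Valid n c R := by
  refine ⟨by simp, fun j hj => ?_, fun j hj => ?_, fun j hj2 hjK => ?_⟩
  · rw [splice_K, mem_Icc] at hj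
    obtain hjm | rfl : j ≤ m ∨ j = m + 1 := by omega
    · rw [splice_α_of_le hjm, splice_τ_of_le hjm, splice_a_of_le hjm]
      exact hσ.2.1 j (mem_Icc.2 ⟨hj.1, hjm.trans hm⟩)
    · rw [splice_α_last, splice_τ_last, splice_a_last]
      exact ⟨div_nonneg (sub_nonneg.2 hA) (sub_pos.2 hT).le, sub_pos.2 hT, hend.1⟩
  · rw [splice_K, mem_Icc] at hj
    obtain hjm | rfl : j ≤ m ∨ j = m + 1 := by omega
    · rw [splice_a_of_le hjm, avg_splice_of_le hjm]
      exact hσ.mem_BR_avg hj.1 (hjm.trans hm)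
    · rw [splice_a_last, avg_splice hT.ne']
      exact hend
  · rw [splice_K] at hjK
    obtain hjm | rfl : j ≤ m ∨ j = m + 1 := by omega
    · rw [splice_a_of_le hjm, avg_splice_of_le (by omega)]
      exact hσ.2.2.2 j hj2 (hjm.trans hm)
    · rw [splice_a_last, Nat.add_sub_cancel, avg_splice_of_le le_rfl]
      exact hstart (by omega)

theorem splice_consecDecreasing
    (hσ : ∀ j, 1 ≤ j → j ≤ m → (σ.a j : ℤ) = (σ.a 1 : ℤ) - ((j : ℤ) - 1))
    (hi : 1 ≤ m → (i : ℤ) = (σ.a 1 : ℤ) - m) : (σ.splice m T A i).ConsecDecreasing := by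
  intro j hj hjK
  obtain rfl | hj2 := hj.eq_or_lt
  · simp
  rw [splice_K] at hjK
  rw [splice_a_of_le (by omega : 1 ≤ m)]
  obtain hjm | rfl : j ≤ m ∨ j = m + 1 := by omega
  · rw [splice_a_of_le hjm]
    exact hσ j hj hjm
  · rw [splice_a_last, hi (by omega)]
    push_cast
    ring

end splice

end DLC

/-- `σ` replaces the first `k` segments of `π`: it ends with the same elapsed time, cumulative
payment and action, so the remaining segments of `π` can still be appended to it. -/
structure IsRewriting (n : ℕ) (c R : ℕ → ℝ) (π : DLC) (k : ℕ) (σ : DLC) : Prop where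
  valid : σ.Valid n c R
  consecDecreasing : σ.ConsecDecreasing
  Tsum_eq : σ.Tsum σ.K = π.Tsum k
  Asum_eq : σ.Asum σ.K = π.Asum k
  a_last : σ.a σ.K = π.a k
  Usum_le : π.Usum R k ≤ σ.Usum R σ.K

namespace IsRewriting

open DLC

variable {n : ℕ} {c R : ℕ → ℝ} {π σ : DLC} {k : ℕ}

theorem avg_eq (h : IsRewriting n c R π k σ) : σ.avg σ.K = π.avg k := by
  rw [avg, avg, h.Tsum_eq, h.Asum_eq]

theorem splice_zero (hπ : π.Valid n c R) :
    IsRewriting n c R π 1 (π.splice 0 (π.Tsum 1) (π.Asum 1) (π.a 1)) := by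
  have hT : π.Tsum 0 < π.Tsum 1 := hπ.Tsum_lt one_pos hπ.1
  refine ⟨splice_valid hπ (Nat.zero_le _) hT (hπ.Asum_mono (Nat.zero_le _) hπ.1)
    (hπ.mem_BR_avg le_rfl hπ.1) (by omega), splice_consecDecreasing (by omega) (by omega),
    Tsum_splice, Asum_splice hT.ne', splice_a_last, ?_⟩
  rw [splice_K, Usum_splice hT.ne']
  simp only [Usum, Tsum, Asum, zero_lt_one, Icc_self, sum_singleton, Icc_eq_empty_of_lt,
    sum_empty]
  exact le_of_eq (by ring)

theorem splice (hπ : π.Valid n c R) (h : IsRewriting n c R π k σ) (hk : k + 1 ≤ π.K)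
    {m : ℕ} (hm : m ≤ σ.K) (hstart : 1 ≤ m → π.a (k + 1) ∈ BR n c R (σ.avg m))
    (hdec : 1 ≤ m → (π.a (k + 1) : ℤ) = (σ.a 1 : ℤ) - m)
    (htail : ∀ j, m < j → j ≤ σ.K →
      σ.τ j * (1 - σ.α j) * R (σ.a j) ≤ σ.τ j * (1 - σ.α j) * R (π.a (k + 1))) :
    IsRewriting n c R π (k + 1) (σ.splice m (π.Tsum (k + 1)) (π.Asum (k + 1)) (π.a (k + 1))) := by
  have hT : σ.Tsum m < π.Tsum (k + 1) := calc
    σ.Tsum m ≤ σ.Tsum σ.K := h.valid.Tsum_mono hm le_rfl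
    _ = π.Tsum k := h.Tsum_eq
    _ < π.Tsum (k + 1) := hπ.Tsum_lt (Nat.lt_succ_self k) hk
  have hA : σ.Asum m ≤ π.Asum (k + 1) := calc
    σ.Asum m ≤ σ.Asum σ.K := h.valid.Asum_mono hm le_rfl
    _ = π.Asum k := h.Asum_eq
    _ ≤ π.Asum (k + 1) := hπ.Asum_mono (Nat.le_succ k) hk
  refine ⟨splice_valid h.valid hm hT hA (hπ.mem_BR_avg (by omega) hk) hstart,
    splice_consecDecreasing (fun j hj hjm => h.consecDecreasing j hj (hjm.trans hm)) hdec,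
    Tsum_splice, Asum_splice hT.ne', splice_a_last, ?_⟩
  have hσ := σ.Usum_le_of_tail hm htail
  rw [h.Tsum_eq, h.Asum_eq] at hσ
  rw [splice_K, Usum_splice hT.ne', π.Usum_succ, π.Tsum_succ, π.Asum_succ]
  linarith [h.Usum_le]

theorem exists_succ_of_add_one_eq (hπ : π.Valid n c R) (h : IsRewriting n c R π k σ)
    (hk : 1 ≤ k) (hkK : k + 1 ≤ π.K) (hi : π.a (k + 1) + 1 = π.a k) :
    ∃ σ', IsRewriting n c R π (k + 1) σ' := by
  refine ⟨_, h.splice hπ hkK le_rfl (fun _ => ?_) (fun _ => ?_) (fun j hj hjK => by omega)⟩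
  · rw [h.avg_eq]
    exact hπ.mem_BR_avg_prev hk hkK
  · have hlast := h.consecDecreasing σ.K h.valid.1 le_rfl
    rw [h.a_last] at hlast
    omega

theorem exists_succ_of_eq (hπ : π.Valid n c R) (h : IsRewriting n c R π k σ)
    (hkK : k + 1 ≤ π.K) (hi : π.a (k + 1) = π.a k) :
    ∃ σ', IsRewriting n c R π (k + 1) σ' := by
  have hK := h.valid.1
  refine ⟨_, h.splice hπ hkK (m := σ.K - 1) (by omega) (fun hm => ?_) (fun _ => ?_)
    (fun j hj hjK => ?_)⟩
  · have hstart := h.valid.mem_BR_avg_prev hm (by omega)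
    rwa [Nat.sub_add_cancel hK, h.a_last, ← hi] at hstart
  · have hlast := h.consecDecreasing σ.K hK le_rfl
    rw [h.a_last] at hlast
    omega
  · obtain rfl : j = σ.K := by omega
    rw [h.a_last, hi]

theorem exists_succ_of_eq_add_one (hInst : LinInstance n c R) (hπ : π.Valid n c R)
    (h : IsRewriting n c R π k σ) (hk : 1 ≤ k) (hkK : k + 1 ≤ π.K)
    (hi : π.a (k + 1) = π.a k + 1) : ∃ σ', IsRewriting n c R π (k + 1) σ' := by
  have hK := h.valid.1
  have hdown : ∀ j, 1 ≤ j → j + 1 ≤ σ.K → σ.a j = σ.a (j + 1) + 1 := fun j hj hjK => by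
    have h1 := h.consecDecreasing j hj (by omega)
    have h2 := h.consecDecreasing (j + 1) (by omega) hjK
    push_cast at h1 h2
    omega
  have hup : π.a (k + 1) ∈ BR n c R (π.avg k) := hπ.mem_BR_avg_prev hk hkK
  have hak := mem_Icc.1 (hπ.mem_BR_avg hk (by omega)).1
  have hak1 := mem_Icc.1 hup.1
  have hα : σ.α σ.K ≤ 1 := by
    have hαK := h.valid.α_eq_avg hInst hK le_rfl
      (fun h2 => by rw [hdown (σ.K - 1) (by omega) (by omega), Nat.sub_add_cancel hK])
      (by rw [h.a_last, h.avg_eq, ← hi]; exact hup)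
    rw [hαK, h.avg_eq, hInst.eq_indiff_of_mem_BR (hπ.mem_BR_avg hk (by omega)) (hi ▸ hup)]
    exact hInst.indiff_le_one hak.1 (by omega)
  refine ⟨_, h.splice hπ hkK (m := σ.K - 2) (by omega) (fun hm => ?_) (fun _ => ?_)
    (fun j hj hjK => ?_)⟩
  · have hstart := h.valid.mem_BR_avg_prev hm (by omega)
    rwa [hdown _ (by omega) (by omega), show σ.K - 2 + 1 + 1 = σ.K by omega, h.a_last, ← hi]
      at hstart
  · have hlast := h.consecDecreasing σ.K hK le_rfl
    rw [h.a_last] at hlast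
    omega
  · obtain rfl | hjK' : j = σ.K ∨ j + 1 = σ.K := by omega
    · rw [h.a_last, hi]
      refine mul_le_mul_of_nonneg_left (hInst.R_lt_succ hak.1 (by omega)).le ?_
      exact mul_nonneg (h.valid.τ_pos (by omega) le_rfl).le (sub_nonneg.2 hα)
    · rw [hdown j (by omega) hjK'.le, hjK', h.a_last, hi]

end IsRewriting

theorem exists_isRewriting {n : ℕ} {c R : ℕ → ℝ} {π : DLC} (hInst : LinInstance n c R)
    (hπ : π.Valid n c R) {k : ℕ} (hk : 1 ≤ k) (hkK : k ≤ π.K) : ∃ σ, IsRewriting n c R π k σ := by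
  induction k, hk using Nat.le_induction with
  | base => exact ⟨_, IsRewriting.splice_zero hπ⟩
  | succ k hk ih =>
    obtain ⟨σ, h⟩ := ih (by omega)
    have hcur := hπ.mem_BR_avg hk (by omega)
    have hnext := hπ.mem_BR_avg_prev hk hkK
    have hup := hInst.le_succ_of_mem_BR hcur hnext
    have hdown := hInst.le_succ_of_mem_BR hnext hcur
    rcases lt_trichotomy (π.a (k + 1)) (π.a k) with hlt | heq | hgt
    · exact h.exists_succ_of_add_one_eq hπ hk hkK (by omega)
    · exact h.exists_succ_of_eq hπ hkK heq
    · exact h.exists_succ_of_eq_add_one hInst hπ hk hkK (by omega)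

/-- Every valid dynamic linear contract can be rewritten,
without losing principal utility, so that its actions form a consecutively
decreasing sequence: `a'^k = a'^1 − (k − 1)`. -/
theorem decreasing_rewriting (n : ℕ) (c R : ℕ → ℝ) (hInst : LinInstance n c R)
    (π : DLC) (hπ : π.Valid n c R) :
    ∃ π' : DLC, π'.Valid n c R ∧
      (∀ k, 1 ≤ k → k ≤ π'.K → (π'.a k : ℤ) = (π'.a 1 : ℤ) - ((k : ℤ) - 1)) ∧
      π'.Util R ≥ π.Util R := by
  obtain ⟨σ, h⟩ := exists_isRewriting hInst hπ hπ.1 le_rfl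
  refine ⟨σ, h.valid, h.consecDecreasing, ?_⟩
  change π.Usum R π.K / π.Tsum π.K ≤ σ.Usum R σ.K / σ.Tsum σ.K
  rw [h.Tsum_eq]
  exact div_le_div_of_nonneg_right h.Usum_le (hπ.Tsum_pos hπ.1 le_rfl).le
end

section
/- Let π = ((α^1, τ^1, a^1), …, (α^K, τ^K, a^K)) be a valid p-scaled dynamic contract whose actions are consecutively increasing, i.e., a^{k+1} = a^k + 1 for every 1 ≤ k ≤ K−1. Then there exists a static p-scaled contract, i.e., a valid single-segment p-scaled dynamic contract π′ = ((α′, τ′, a′)), with Util(π′) ≥ Util(π). -/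
open Finset

/-- Expected reward `R_i = Σ_j F_{ij} r_j` of action `i`. -/
noncomputable def expRew (m : ℕ) (F : ℕ → ℕ → ℝ) (r : ℕ → ℝ) (i : ℕ) : ℝ :=
  ∑ j ∈ Finset.Icc 1 m, F i j * r j

/-- Expected payment `P_i = Σ_j F_{ij} p_j` of action `i` under base contract `p`. -/
noncomputable def expPay (m : ℕ) (F : ℕ → ℕ → ℝ) (p : ℕ → ℝ) (i : ℕ) : ℝ :=
  ∑ j ∈ Finset.Icc 1 m, F i j * p j

/-- Basic assumptions of a principal-agent instance with base contract `p`. -/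
def PInstance (n m : ℕ) (c : ℕ → ℝ) (F : ℕ → ℕ → ℝ) (r : ℕ → ℝ) (p : ℕ → ℝ) : Prop :=
  2 ≤ n ∧ (∀ i ∈ Finset.Icc 1 n, 0 ≤ c i) ∧ (∀ j ∈ Finset.Icc 1 m, 0 ≤ r j) ∧
    (∀ i ∈ Finset.Icc 1 n,
      (∀ j ∈ Finset.Icc 1 m, 0 ≤ F i j) ∧ ∑ j ∈ Finset.Icc 1 m, F i j = 1) ∧
    (∀ j ∈ Finset.Icc 1 m, 0 ≤ p j)

/-- Best-response set `BR_p(x)` of the agent to the scaled contract `x·p`. -/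
def BRp (n m : ℕ) (c : ℕ → ℝ) (F : ℕ → ℕ → ℝ) (p : ℕ → ℝ) (x : ℝ) : Set ℕ :=
  {i | i ∈ Finset.Icc 1 n ∧ ∀ j ∈ Finset.Icc 1 n,
    x * expPay m F p j - c j ≤ x * expPay m F p i - c i}

/-- `β` records the breakpoints of `p`-scaled contracts: `β 0 = α_{0,1} = 0`,
`β i = α_{i,i+1}` (for `1 ≤ i ≤ n-1`), they are strictly increasing, and for
`α ≥ 0` action `i` is a best response iff `α_{i-1,i} ≤ α ≤ α_{i,i+1}`
(with `α_{n,n+1} = +∞`). -/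
def Breakpoints (n m : ℕ) (c : ℕ → ℝ) (F : ℕ → ℕ → ℝ) (p : ℕ → ℝ) (β : ℕ → ℝ) : Prop :=
  β 0 = 0 ∧ (∀ i, i + 1 ≤ n - 1 → β i < β (i + 1)) ∧ (0 < β 1) ∧
    (∀ x : ℝ, 0 ≤ x → ∀ i, 1 ≤ i → i ≤ n →
      (i ∈ BRp n m c F p x ↔ (β (i - 1) ≤ x ∧ (i < n → x ≤ β i))))

/-- A `p`-scaled dynamic contract with `K` segments (indexed `1,…,K`):
scalars `α`, durations `τ`, and actions `a`. -/
structure DSC where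
  K : ℕ
  α : ℕ → ℝ
  τ : ℕ → ℝ
  a : ℕ → ℕ

namespace DSC

/-- Total duration of the first `k` segments. -/
noncomputable def Tsum (π : DSC) (k : ℕ) : ℝ := ∑ j ∈ Finset.Icc 1 k, π.τ j

/-- Time-averaged scalar `ᾱ^k` after the first `k` segments. -/
noncomputable def avg (π : DSC) (k : ℕ) : ℝ :=
  (∑ j ∈ Finset.Icc 1 k, π.α j * π.τ j) / π.Tsum k

/-- Validity of a `p`-scaled dynamic contract. -/
def Valid (n m : ℕ) (c : ℕ → ℝ) (F : ℕ → ℕ → ℝ) (p : ℕ → ℝ) (π : DSC) : Prop :=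
  1 ≤ π.K ∧
    (∀ k ∈ Finset.Icc 1 π.K, 0 ≤ π.α k ∧ 0 < π.τ k ∧ π.a k ∈ Finset.Icc 1 n) ∧
    (∀ k ∈ Finset.Icc 1 π.K, π.a k ∈ BRp n m c F p (π.avg k)) ∧
    (∀ k, 2 ≤ k → k ≤ π.K → π.a k ∈ BRp n m c F p (π.avg (k - 1)))

/-- Time-averaged principal utility. -/
noncomputable def Util (m : ℕ) (F : ℕ → ℕ → ℝ) (r : ℕ → ℝ) (p : ℕ → ℝ) (π : DSC) : ℝ :=
  (∑ k ∈ Finset.Icc 1 π.K,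
    π.τ k * (expRew m F r (π.a k) - π.α k * expPay m F p (π.a k))) / π.Tsum π.K

/-- Free-fall: the zero contract is offered on every segment after the first. -/
def FreeFall (π : DSC) : Prop := ∀ k, 2 ≤ k → k ≤ π.K → π.α k = 0

end DSC

/-! With increasing actions, `a^k ∈ BR_p(ᾱ^k)` and `a^k + 1 ∈ BR_p(ᾱ^{k+1})` give
`ᾱ^k ≤ α_{a^k, a^k+1} ≤ ᾱ^{k+1}`, so the running averages increase. Since `ᾱ^{k+1}` is a
convex combination of `ᾱ^k` and `α^{k+1}`, this forces `ᾱ^k ≤ α^k` on every segment, so the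
principal earns at most `R_{a^k} - ᾱ^k P_{a^k}` there: the utility of the static contract
`ᾱ^k · p`, which still induces `a^k`. The best of these static contracts dominates `π`. -/

theorem expPay_nonneg {m : ℕ} {F : ℕ → ℕ → ℝ} {p : ℕ → ℝ} {i : ℕ}
    (hF : ∀ j ∈ Icc 1 m, 0 ≤ F i j) (hp : ∀ j ∈ Icc 1 m, 0 ≤ p j) : 0 ≤ expPay m F p i :=
  sum_nonneg fun j hj => mul_nonneg (hF j hj) (hp j hj)

namespace DSC

section RunningAverage

variable (π : DSC) {k : ℕ}

theorem Tsum_succ : π.Tsum (k + 1) = π.Tsum k + π.τ (k + 1) :=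
  sum_Icc_succ_top (Nat.le_add_left 1 k) _

theorem Tsum_nonneg (hτ : ∀ j ∈ Icc 1 k, 0 < π.τ j) : 0 ≤ π.Tsum k :=
  sum_nonneg fun j hj => (hτ j hj).le

theorem Tsum_pos (hk : 1 ≤ k) (hτ : ∀ j ∈ Icc 1 k, 0 < π.τ j) : 0 < π.Tsum k :=
  sum_pos hτ ⟨1, mem_Icc.2 ⟨le_rfl, hk⟩⟩

theorem avg_nonneg (hα : ∀ j ∈ Icc 1 k, 0 ≤ π.α j) (hτ : ∀ j ∈ Icc 1 k, 0 < π.τ j) :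
    0 ≤ π.avg k :=
  div_nonneg (sum_nonneg fun j hj => mul_nonneg (hα j hj) (hτ j hj).le) (π.Tsum_nonneg hτ)

theorem sum_α_mul_τ_eq_avg_mul_Tsum (hτ : ∀ j ∈ Icc 1 k, 0 < π.τ j) :
    ∑ j ∈ Icc 1 k, π.α j * π.τ j = π.avg k * π.Tsum k := by
  rcases Nat.eq_zero_or_pos k with rfl | hk
  · simp [avg, Tsum]
  · exact (div_mul_cancel₀ _ (π.Tsum_pos hk hτ).ne').symm

/-- `ᾱ^{k+1}` is the `(T^k, τ^{k+1})`-weighted mean of `ᾱ^k` and `α^{k+1}`. -/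
theorem τ_mul_α_sub_avg (hτ : ∀ j ∈ Icc 1 (k + 1), 0 < π.τ j) :
    π.τ (k + 1) * (π.α (k + 1) - π.avg (k + 1)) = π.Tsum k * (π.avg (k + 1) - π.avg k) := by
  have hτ' : ∀ j ∈ Icc 1 k, 0 < π.τ j := fun j hj =>
    hτ j (Icc_subset_Icc_right k.le_succ hj)
  have hsum := sum_Icc_succ_top (Nat.le_add_left 1 k) fun j => π.α j * π.τ j
  rw [π.sum_α_mul_τ_eq_avg_mul_Tsum hτ, π.sum_α_mul_τ_eq_avg_mul_Tsum hτ'] at hsum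
  linear_combination -hsum + π.avg (k + 1) * π.Tsum_succ (k := k)

theorem avg_zero : π.avg 0 = 0 := by
  simp [avg]

theorem avg_succ_le_α_succ (hτ : ∀ j ∈ Icc 1 (k + 1), 0 < π.τ j)
    (hmono : π.avg k ≤ π.avg (k + 1)) : π.avg (k + 1) ≤ π.α (k + 1) := by
  have hτk : 0 < π.τ (k + 1) := hτ (k + 1) (mem_Icc.2 ⟨Nat.le_add_left 1 k, le_rfl⟩)
  have hT : 0 ≤ π.Tsum k := π.Tsum_nonneg fun j hj => hτ j (Icc_subset_Icc_right k.le_succ hj)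
  have h : 0 ≤ π.τ (k + 1) * (π.α (k + 1) - π.avg (k + 1)) :=
    π.τ_mul_α_sub_avg hτ ▸ mul_nonneg hT (sub_nonneg.2 hmono)
  exact sub_nonneg.1 (nonneg_of_mul_nonneg_right h hτk)

end RunningAverage

section Validity

variable {n m : ℕ} {c : ℕ → ℝ} {F : ℕ → ℕ → ℝ} {p : ℕ → ℝ} {π : DSC} {k : ℕ}

theorem Valid.τ_pos (hπ : π.Valid n m c F p) (hk : k ≤ π.K) : ∀ j ∈ Icc 1 k, 0 < π.τ j :=
  fun j hj => (hπ.2.1 j (Icc_subset_Icc_right hk hj)).2.1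

theorem Valid.avg_nonneg (hπ : π.Valid n m c F p) (hk : k ≤ π.K) : 0 ≤ π.avg k :=
  π.avg_nonneg (fun j hj => (hπ.2.1 j (Icc_subset_Icc_right hk hj)).1) (hπ.τ_pos hk)

theorem Valid.avg_le_avg_succ {β : ℕ → ℝ} (hπ : π.Valid n m c F p)
    (hβ : Breakpoints n m c F p β) (hinc : ∀ k, 1 ≤ k → k < π.K → π.a (k + 1) = π.a k + 1)
    (hkK : k + 1 ≤ π.K) : π.avg k ≤ π.avg (k + 1) := by
  rcases Nat.eq_zero_or_pos k with rfl | hk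
  · exact π.avg_zero ▸ hπ.avg_nonneg hkK
  have hmem : ∀ j, 1 ≤ j → j ≤ π.K → π.a j ∈ BRp n m c F p (π.avg j) := fun j h1 h2 =>
    hπ.2.2.1 j (mem_Icc.2 ⟨h1, h2⟩)
  have hsucc : π.a (k + 1) = π.a k + 1 := hinc k hk hkK
  obtain ⟨ha1, -⟩ := mem_Icc.1 (hmem k hk (by omega)).1
  obtain ⟨-, han⟩ := mem_Icc.1 (hmem (k + 1) (by omega) hkK).1
  have hlow : π.avg k ≤ β (π.a k) :=
    ((hβ.2.2.2 _ (hπ.avg_nonneg (by omega)) (π.a k) ha1 (by omega)).1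
      (hmem k hk (by omega))).2 (by omega)
  have hup : β (π.a k) ≤ π.avg (k + 1) := by
    simpa [hsucc] using ((hβ.2.2.2 _ (hπ.avg_nonneg hkK) (π.a (k + 1)) (by omega) han).1
      (hmem (k + 1) (by omega) hkK)).1
  exact hlow.trans hup

theorem Valid.avg_le_α {β : ℕ → ℝ} (hπ : π.Valid n m c F p)
    (hβ : Breakpoints n m c F p β) (hinc : ∀ k, 1 ≤ k → k < π.K → π.a (k + 1) = π.a k + 1)
    (hk : k ∈ Icc 1 π.K) : π.avg k ≤ π.α k := by
  obtain ⟨hk1, hkK⟩ := mem_Icc.1 hk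
  obtain ⟨j, rfl⟩ : ∃ j, k = j + 1 := ⟨k - 1, by omega⟩
  exact π.avg_succ_le_α_succ (hπ.τ_pos hkK) (hπ.avg_le_avg_succ hβ hinc hkK)

end Validity

def static (α : ℝ) (a : ℕ) : DSC := ⟨1, fun _ => α, fun _ => 1, fun _ => a⟩

theorem avg_static (α : ℝ) (a : ℕ) : (static α a).avg 1 = α := by
  simp [static, avg, Tsum]

theorem static_valid {n m : ℕ} {c : ℕ → ℝ} {F : ℕ → ℕ → ℝ} {p : ℕ → ℝ} {α : ℝ} {a : ℕ}
    (hα : 0 ≤ α) (ha : a ∈ BRp n m c F p α) : (static α a).Valid n m c F p := by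
  have hK : (static α a).K = 1 := rfl
  refine ⟨le_rfl, ?_, ?_, fun k h2 hk => absurd (hK ▸ hk) (by omega)⟩ <;>
    intro k hk <;> obtain rfl : k = 1 := by simpa [hK] using hk
  · exact ⟨hα, one_pos, ha.1⟩
  · rwa [avg_static]

theorem Util_static (m : ℕ) (F : ℕ → ℕ → ℝ) (r p : ℕ → ℝ) (α : ℝ) (a : ℕ) :
    (static α a).Util m F r p = expRew m F r a - α * expPay m F p a := by
  simp [static, Util, Tsum]

theorem Util_le_of_forall_le {m : ℕ} {F : ℕ → ℕ → ℝ} {r p : ℕ → ℝ} {π : DSC} {M : ℝ}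
    (hK : 1 ≤ π.K) (hτ : ∀ k ∈ Icc 1 π.K, 0 < π.τ k)
    (hM : ∀ k ∈ Icc 1 π.K, expRew m F r (π.a k) - π.α k * expPay m F p (π.a k) ≤ M) :
    π.Util m F r p ≤ M := by
  rw [Util, div_le_iff₀ (π.Tsum_pos hK hτ), Tsum, mul_sum]
  exact sum_le_sum fun k hk => by
    rw [mul_comm M]
    exact mul_le_mul_of_nonneg_left (hM k hk) (hτ k hk).le

end DSC

open DSC in
/-- A valid `p`-scaled dynamic contract with consecutively
increasing actions is dominated by a static (single-segment) `p`-scaled contract. -/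
theorem increasing_dominated_by_static (n m : ℕ) (c : ℕ → ℝ) (F : ℕ → ℕ → ℝ)
    (r : ℕ → ℝ) (p : ℕ → ℝ) (β : ℕ → ℝ)
    (hInst : PInstance n m c F r p) (hβ : Breakpoints n m c F p β)
    (π : DSC) (hπ : π.Valid n m c F p)
    (hinc : ∀ k, 1 ≤ k → k < π.K → π.a (k + 1) = π.a k + 1) :
    ∃ π' : DSC, π'.Valid n m c F p ∧ π'.K = 1 ∧
      π'.Util m F r p ≥ π.Util m F r p := by
  obtain ⟨-, -, -, hF, hp⟩ := hInst
  let staticUtil k := expRew m F r (π.a k) - π.avg k * expPay m F p (π.a k)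
  obtain ⟨k₀, hk₀, hmax⟩ :=
    exists_max_image (Icc 1 π.K) staticUtil ⟨1, mem_Icc.2 ⟨le_rfl, hπ.1⟩⟩
  refine ⟨static (π.avg k₀) (π.a k₀),
    static_valid (hπ.avg_nonneg (mem_Icc.1 hk₀).2) (hπ.2.2.1 k₀ hk₀), rfl, ?_⟩
  rw [ge_iff_le, Util_static]
  refine Util_le_of_forall_le hπ.1 (hπ.τ_pos le_rfl) fun k hk => ?_
  have hP : 0 ≤ expPay m F p (π.a k) := expPay_nonneg (hF _ (hπ.2.1 k hk).2.2).1 hp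
  calc expRew m F r (π.a k) - π.α k * expPay m F p (π.a k)
      ≤ expRew m F r (π.a k) - π.avg k * expPay m F p (π.a k) := by
        gcongr
        exact hπ.avg_le_α hβ hinc hk
    _ ≤ staticUtil k₀ := hmax k hk
end
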